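/- Let (A, ∘) be an anti-pre-Lie algebra and r ∈ A⊗A such that (L_∘(x)⊗I - I⊗ad(x))(r+τ(r)) = 0 for all x ∈ A. Then r satisfies the anti-pre-Lie Yang–Baxter equation S(r) = r₁₂∘r₁₃ + r₁₂∘r₂₃ - [r₁₃, r₂₃] = 0 if and only if τ(r) satisfies it, i.e., S(τ(r)) = r₂₁∘r₃₁ + r₂₁∘r₃₂ + [r₃₂, r₃₁] = 0. -/

import Mathlib

/-
Write `r = ∑ i, a i ⊗ b i` and let `D(x) = (L_∘(x) ⊗ I - I ⊗ ad(x))(r + τ(r))` be the invariance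
defect. Expanding, `S(r) - S(τ(r))` equals
`∑ j, (D(a j) ⊗ b j + τ(D(a j)) ⊗ b j - b j ⊗ D(a j) - (D(b j) with a j inserted in the middle))`
up to a double sum `∑ i j, (G i j - G j i)`, which vanishes by exchanging the indices. Hence
`S(r) = S(τ(r))` as soon as `D` vanishes identically.
-/

open scoped TensorProduct

def IsAntiPreLie {k A : Type*} [Field k] [AddCommGroup A] [Module k A]
    (c : A →ₗ[k] A →ₗ[k] A) : Prop :=
  (∀ x y z, c x (c y z) - c y (c x z) = c (c y x - c x y) z) ∧
  (∀ x y z, c (c x y - c y x) z + c (c y z - c z y) x + c (c z x - c x z) y = 0)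

open TensorProduct LinearMap Finset

section

variable {R M ι : Type*} [CommRing R] [AddCommGroup M] [Module R M] [Fintype ι]
  (c : M →ₗ[R] M →ₗ[R] M) (a b : ι → M)

/-- `S(r) = r₁₂∘r₁₃ + r₁₂∘r₂₃ - [r₁₃, r₂₃]` for `r = ∑ i, a i ⊗ b i` and `x ∘ y = c x y`. -/
def aplYBE : M ⊗[R] M ⊗[R] M :=
  (∑ i, ∑ j, a i ⊗ₜ[R] (c (b i) (a j)) ⊗ₜ[R] b j) +
    (∑ i, ∑ j, (c (a i) (a j)) ⊗ₜ[R] b i ⊗ₜ[R] b j) -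
    (∑ i, ∑ j, a i ⊗ₜ[R] a j ⊗ₜ[R] (c (b i) (b j) - c (b j) (b i)))

/-- `(L_∘(x) ⊗ I - I ⊗ ad(x))(r + τ(r))` for `r = ∑ i, a i ⊗ b i` and `x ∘ y = c x y`. -/
def invarianceDefect (x : M) : M ⊗[R] M :=
  ∑ i, ((c x (a i)) ⊗ₜ[R] b i - a i ⊗ₜ[R] (c x (b i) - c (b i) x) +
    (c x (b i)) ⊗ₜ[R] a i - b i ⊗ₜ[R] (c x (a i) - c (a i) x))

theorem aplYBE_sub_aplYBE_swap :
    aplYBE c a b - aplYBE c b a =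
      ∑ j, (invarianceDefect c a b (a j) ⊗ₜ b j
        + TensorProduct.comm R M M (invarianceDefect c a b (a j)) ⊗ₜ b j
        - rTensor M (TensorProduct.mk R M M (b j)) (invarianceDefect c a b (a j))
        - rTensor M ((TensorProduct.mk R M M).flip (a j)) (invarianceDefect c a b (b j))) := by
  set G : ι → ι → M ⊗[R] M ⊗[R] M := fun i j =>
    b j ⊗ₜ c (a j) (a i) ⊗ₜ b i + c (b j) (a i) ⊗ₜ a j ⊗ₜ b i
      + b i ⊗ₜ a j ⊗ₜ c (a i) (b j) + b j ⊗ₜ a i ⊗ₜ c (b i) (a j) with hG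
  have hS : aplYBE c a b = ∑ j, ∑ i, (a i ⊗ₜ[R] (c (b i) (a j)) ⊗ₜ[R] b j
      + (c (a i) (a j)) ⊗ₜ[R] b i ⊗ₜ[R] b j
      - a i ⊗ₜ[R] a j ⊗ₜ[R] (c (b i) (b j) - c (b j) (b i))) := by
    rw [Finset.sum_comm]
    simp only [aplYBE, sum_add_distrib, sum_sub_distrib]
  have hswap : ∑ j, ∑ i, (G i j - G j i) = 0 := by
    simp only [sum_sub_distrib]
    exact sub_eq_zero.2 sum_comm
  rw [← sub_eq_zero, ← hswap, hS, aplYBE]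
  simp only [invarianceDefect, map_sum, map_sub, map_add, sum_tmul, tmul_sub, sub_tmul,
    add_tmul, rTensor_tmul, comm_tmul, mk_apply, flip_apply]
  simp only [← sum_add_distrib, ← sum_sub_distrib]
  refine sum_congr rfl fun j _ => sum_congr rfl fun i _ => ?_
  simp only [hG]
  abel

theorem aplYBE_eq_aplYBE_swap_of_invarianceDefect_eq_zero
    (hinv : ∀ x, invarianceDefect c a b x = 0) : aplYBE c a b = aplYBE c b a := by
  rw [← sub_eq_zero, aplYBE_sub_aplYBE_swap]
  simp [hinv]

end

theorem aplYBE_tau_iff_general {k A ι : Type*} [Field k] [AddCommGroup A] [Module k A]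
    [Fintype ι] (c : A →ₗ[k] A →ₗ[k] A) (a b : ι → A)
    (hinv : ∀ x : A,
      (∑ i, ((c x (a i)) ⊗ₜ[k] b i - a i ⊗ₜ[k] (c x (b i) - c (b i) x) +
        (c x (b i)) ⊗ₜ[k] a i - b i ⊗ₜ[k] (c x (a i) - c (a i) x))) = 0) :
    ((∑ i, ∑ j, a i ⊗ₜ[k] (c (b i) (a j)) ⊗ₜ[k] b j) +
      (∑ i, ∑ j, (c (a i) (a j)) ⊗ₜ[k] b i ⊗ₜ[k] b j) -
      (∑ i, ∑ j, a i ⊗ₜ[k] a j ⊗ₜ[k] (c (b i) (b j) - c (b j) (b i))) = 0)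
    ↔ ((∑ i, ∑ j, b i ⊗ₜ[k] (c (a i) (b j)) ⊗ₜ[k] a j) +
      (∑ i, ∑ j, (c (b i) (b j)) ⊗ₜ[k] a i ⊗ₜ[k] a j) -
      (∑ i, ∑ j, b i ⊗ₜ[k] b j ⊗ₜ[k] (c (a i) (a j) - c (a j) (a i))) = 0) := by
  change aplYBE c a b = 0 ↔ aplYBE c b a = 0
  rw [aplYBE_eq_aplYBE_swap_of_invarianceDefect_eq_zero c a b hinv]

/-- for `r = ∑ i, a i ⊗ b i` in an anti-pre-Lie algebra with
`(L_∘(x)⊗I - I⊗ad(x))(r + τ(r)) = 0` for all `x`, `r` satisfies the anti-pre-Lie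
Yang–Baxter equation `S(r) = 0` iff `τ(r)` does, i.e. `S(τ(r)) = 0` (the same
expression with the family `(a, b)` replaced by `(b, a)`). -/
theorem aplYBE_tau_iff {k A ι : Type*} [Field k] [AddCommGroup A] [Module k A]
    [Fintype ι] (c : A →ₗ[k] A →ₗ[k] A) (h : IsAntiPreLie c) (a b : ι → A)
    (hinv : ∀ x : A,
      (∑ i, ((c x (a i)) ⊗ₜ[k] b i - a i ⊗ₜ[k] (c x (b i) - c (b i) x) +
        (c x (b i)) ⊗ₜ[k] a i - b i ⊗ₜ[k] (c x (a i) - c (a i) x))) = 0) :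
    ((∑ i, ∑ j, a i ⊗ₜ[k] (c (b i) (a j)) ⊗ₜ[k] b j) +
      (∑ i, ∑ j, (c (a i) (a j)) ⊗ₜ[k] b i ⊗ₜ[k] b j) -
      (∑ i, ∑ j, a i ⊗ₜ[k] a j ⊗ₜ[k] (c (b i) (b j) - c (b j) (b i))) = 0)
    ↔ ((∑ i, ∑ j, b i ⊗ₜ[k] (c (a i) (b j)) ⊗ₜ[k] a j) +
      (∑ i, ∑ j, (c (b i) (b j)) ⊗ₜ[k] a i ⊗ₜ[k] a j) -
      (∑ i, ∑ j, b i ⊗ₜ[k] b j ⊗ₜ[k] (c (a i) (a j) - c (a j) (a i))) = 0) :=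
  aplYBE_tau_iff_general c a b hinv
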